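/- arXiv:2207.06542 — 2 statements merged into one kernel-verified Lean document; each statement's English description precedes it below -/
import Mathlib

section
/- In local coordinates, the commutator of iterated covariant derivatives of a local section f of a fiber bundle with non-linear connection satisfies (D^{∇Vert}_{∂/∂x^μ} D^∇_{∂/∂x^ν} f − Θ(D^{∇Vert}_{∂/∂x^ν} D^∇_{∂/∂x^μ} f))(x) = (x; f^α(x); R^α_{μν}(x,f(x))), where the difference is taken in the affine fibers of the double projection Π on Vert Vert FM and R^α_{μν} are the curvature coefficients. -/
/-- The fifth (innermost) coordinate of the iterated covariant derivative
`D^{∇Vert}_{∂/∂x^μ} D^∇_{∂/∂x^ν} f` of a local section `f` of a fiber bundle with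
non-linear connection given by generalized Christoffel symbols `Γ`, in local
coordinates (obtained by substituting the variation by `∂f/∂x^ν + Γ_ν` in the
coordinate formula for `D^{∇Vert}`):
`∂²f^α/∂x^μ∂x^ν + ∂Γ^α_ν/∂x^μ + Σ_β ∂Γ^α_μ/∂f^β Γ^β_ν
  + Σ_β ∂Γ^α_ν/∂f^β ∂f^β/∂x^μ + Σ_β ∂Γ^α_μ/∂f^β ∂f^β/∂x^ν`, evaluated at `(x, f(x))`. -/
noncomputable def stmt11fifth {m n : ℕ}
    (Γ : ((Fin m → ℝ) × (Fin n → ℝ)) → Fin m → Fin n → ℝ)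
    (f : (Fin m → ℝ) → (Fin n → ℝ)) (μ ν : Fin m) (x : Fin m → ℝ) (α : Fin n) : ℝ :=
  fderiv ℝ (fun y => fderiv ℝ (fun z => f z α) y (Pi.single ν 1)) x (Pi.single μ 1)
    + fderiv ℝ (fun p => Γ p ν α) (x, f x) (Pi.single μ 1, (0 : Fin n → ℝ))
    + ∑ β, fderiv ℝ (fun p => Γ p μ α) (x, f x) ((0 : Fin m → ℝ), Pi.single β 1) * Γ (x, f x) ν β
    + ∑ β, fderiv ℝ (fun p => Γ p ν α) (x, f x) ((0 : Fin m → ℝ), Pi.single β 1)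
        * fderiv ℝ (fun z => f z β) x (Pi.single μ 1)
    + ∑ β, fderiv ℝ (fun p => Γ p μ α) (x, f x) ((0 : Fin m → ℝ), Pi.single β 1)
        * fderiv ℝ (fun z => f z β) x (Pi.single ν 1)

lemma aux_symm {E : Type*} [NormedAddCommGroup E] [NormedSpace ℝ E] (g : E → ℝ)
    (hg : ContDiff ℝ (⊤ : ℕ∞) g) (x v w : E) :
    fderiv ℝ (fun y => fderiv ℝ g y v) x w = fderiv ℝ (fun y => fderiv ℝ g y w) x v := by
  have hd : DifferentiableAt ℝ (fderiv ℝ g) x := by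
    have : ContDiff ℝ 1 (fderiv ℝ g) := (hg.fderiv_right (by exact WithTop.coe_le_coe.2 le_top))
    exact this.differentiable one_ne_zero x
  have key : ∀ u z : E, fderiv ℝ (fun y => fderiv ℝ g y u) x z = fderiv ℝ (fderiv ℝ g) x z u := by
    intro u z
    have := fderiv_clm_apply (c := fderiv ℝ g) (u := fun _ : E => u) hd (differentiableAt_const u)
    simp [this]
  rw [key, key]
  exact (hg.contDiffAt.isSymmSndFDerivAt (by rw [minSmoothness_of_isRCLikeNormedField]; exact WithTop.coe_le_coe.2 le_top)) w v

/-- In local coordinates the commutator of iterated covariant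
derivatives of a local section `f` satisfies
`D^{∇Vert}_{∂/∂x^μ} D^∇_{∂/∂x^ν} f − Θ(D^{∇Vert}_{∂/∂x^ν} D^∇_{∂/∂x^μ} f) = (x; f(x); R^α_{μν}(x,f(x)))`:
since `Θ` swaps the two middle coordinates and the difference in the affine fibers of
the double projection `Π` on `Vert Vert FM` subtracts the last coordinates, the
identity amounts to the difference of the fifth coordinates being the curvature
coefficients `R^α_{μν}(x, f(x))`. -/
theorem stmt_11 {m n : ℕ}
    (Γ : ((Fin m → ℝ) × (Fin n → ℝ)) → Fin m → Fin n → ℝ)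
    (hΓ : ∀ μ α, ContDiff ℝ (⊤ : ℕ∞) (fun p => Γ p μ α))
    (f : (Fin m → ℝ) → (Fin n → ℝ)) (hf : ContDiff ℝ (⊤ : ℕ∞) f)
    (μ ν : Fin m) (x : Fin m → ℝ) (α : Fin n) :
    stmt11fifth Γ f μ ν x α - stmt11fifth Γ f ν μ x α
      = fderiv ℝ (fun p => Γ p ν α) (x, f x) (Pi.single μ 1, (0 : Fin n → ℝ))
        - fderiv ℝ (fun p => Γ p μ α) (x, f x) (Pi.single ν 1, (0 : Fin n → ℝ))
        + ∑ β, (Γ (x, f x) ν β * fderiv ℝ (fun p => Γ p μ α) (x, f x) ((0 : Fin m → ℝ), Pi.single β 1)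
              - Γ (x, f x) μ β * fderiv ℝ (fun p => Γ p ν α) (x, f x) ((0 : Fin m → ℝ), Pi.single β 1)) := by
  simp only [stmt11fifth]
  rw [aux_symm (fun z => f z α) (contDiff_pi.1 hf α) x (Pi.single ν 1) (Pi.single μ 1),
    Finset.sum_sub_distrib]
  simp only [mul_comm]
  ring
end

section
/- Under the iterated vertical trivialization Ψ: Vert Vert GM ≅ (GM × 𝔤) × (𝔤 × 𝔤) of a principal G-bundle, the canonical involution Θ takes the form Θ(g, X, Y, Z) = (g, Y, X, Z + [X,Y]). -/
open NormedSpace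

/-!
On the axes `ε = 0` and `t = 0` both families reduce to `g e^{tY}` and `g e^{εX}`, so only the
mixed partial needs work. For `(t, ε) ↦ g e^{tX} e^{εY + tεZ}` the mixed partial at the origin
is `g (XY + Z)` in either order of differentiation: taking `∂_ε` first gives
`g e^{tX} (Y + tZ)`; taking `∂_ε` of the swapped family first gives
`g X e^{tY} + t · g (D exp_{tY}) Z`, whose `t`-derivative at `0` is `g X Y + g (D exp_0) Z`
because `D exp` is continuous and `D exp_0 = id`. Hence the two mixed partials are
`g (XY + Z)` and `g (YX + Z + [X, Y])`, which agree.
-/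

theorem hasDerivAt_smul_self_of_continuousAt {𝕜 E : Type*} [NontriviallyNormedField 𝕜]
    [NormedAddCommGroup E] [NormedSpace 𝕜 E] {ψ : 𝕜 → E} (hψ : ContinuousAt ψ 0) :
    HasDerivAt (fun t => t • ψ t) (ψ 0) 0 := by
  rw [hasDerivAt_iff_tendsto_slope]
  refine (hψ.tendsto.mono_left nhdsWithin_le_nhds).congr' ?_
  filter_upwards [self_mem_nhdsWithin] with t ht
  rw [slope_def_module, zero_smul, sub_zero, sub_zero, smul_smul, inv_mul_cancel₀ ht, one_smul]

theorem contDiff_normedSpace_exp {𝕂 𝔸 : Type*} [RCLike 𝕂] [NormedRing 𝔸] [NormedAlgebra 𝕂 𝔸]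
    [CompleteSpace 𝔸] {n : WithTop ℕ∞} : ContDiff 𝕂 n (exp : 𝔸 → 𝔸) :=
  AnalyticOnNhd.contDiff fun x _ => exp_analytic x

section

variable {A : Type*} [NormedRing A] [NormedAlgebra ℝ A] [CompleteSpace A]

theorem hasDerivAt_mul_exp_smul_mul_exp_add_smul (g X a b : A) :
    HasDerivAt (fun e : ℝ => g * exp (e • X) * exp (a + e • b))
      (g * X * exp a + g * fderiv ℝ exp a b) 0 := by
  have hline : HasDerivAt (fun e : ℝ => a + e • b) b 0 := by
    simpa using ((hasDerivAt_id (0 : ℝ)).smul_const b).const_add a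
  have hexp : HasDerivAt (fun e : ℝ => exp (a + e • b)) (fderiv ℝ exp a b) 0 :=
    ((contDiff_normedSpace_exp.differentiable one_ne_zero) _).hasFDerivAt.comp_hasDerivAt_of_eq
      0 hline (by simp)
  simpa [mul_assoc] using ((hasDerivAt_exp_smul_const X 0).const_mul g).fun_mul hexp

theorem deriv_deriv_mul_exp_smul_mul_exp (g X Y Z : A) :
    deriv (fun t : ℝ => deriv (fun e => g * exp (t • X) * exp (e • Y + (t * e) • Z)) 0) 0
      = g * (X * Y + Z) := by
  have inner (t : ℝ) :
      deriv (fun e => g * exp (t • X) * exp (e • Y + (t * e) • Z)) 0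
        = g * exp (t • X) * (Y + t • Z) := by
    have h := (hasDerivAt_exp_smul_const (Y + t • Z) (0 : ℝ)).const_mul (g * exp (t • X))
    rw [zero_smul, exp_zero, one_mul] at h
    simpa only [smul_add, smul_smul, mul_comm _ t] using h.deriv
  have outer : HasDerivAt (fun t : ℝ => g * exp (t • X) * (Y + t • Z)) (g * (X * Y + Z)) 0 := by
    have h1 := (hasDerivAt_exp_smul_const X (0 : ℝ)).const_mul g
    have h2 := ((hasDerivAt_id (0 : ℝ)).smul_const Z).const_add Y
    simpa [mul_add, mul_assoc] using h1.fun_mul h2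
  simp only [inner, outer.deriv]

theorem deriv_deriv_mul_exp_smul_mul_exp_swap (g X Y Z : A) :
    deriv (fun t : ℝ => deriv (fun e => g * exp (e • X) * exp (t • Y + (t * e) • Z)) 0) 0
      = g * (X * Y + Z) := by
  have inner (t : ℝ) :
      deriv (fun e => g * exp (e • X) * exp (t • Y + (t * e) • Z)) 0
        = g * X * exp (t • Y) + t • (g * fderiv ℝ exp (t • Y) Z) := by
    have h := hasDerivAt_mul_exp_smul_mul_exp_add_smul g X (t • Y) (t • Z)
    simp only [smul_smul, mul_comm _ t] at h
    rw [h.deriv, map_smul, mul_smul_comm]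
  have hψ : ContinuousAt (fun t : ℝ => g * fderiv ℝ exp (t • Y) Z) 0 := by
    have := (contDiff_normedSpace_exp (𝕂 := ℝ) (𝔸 := A) (n := 1)).continuous_fderiv one_ne_zero
    fun_prop
  have outer : HasDerivAt (fun t : ℝ => g * X * exp (t • Y) + t • (g * fderiv ℝ exp (t • Y) Z))
      (g * (X * Y + Z)) 0 := by
    have h := ((hasDerivAt_exp_smul_const Y (0 : ℝ)).const_mul (g * X)).fun_add
      (hasDerivAt_smul_self_of_continuousAt hψ)
    simpa [(hasFDerivAt_exp_zero (𝕂 := ℝ)).fderiv, mul_add, mul_assoc] using h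
  simp only [inner, outer.deriv]

end

/-- Under the iterated vertical trivialization
`Ψ : Vert Vert GM ≅ (GM × 𝔤) × (𝔤 × 𝔤)` of a principal `G`-bundle, with
`Ψ⁻¹(g,X,Y,Z) = d/dt|₀ d/dε|₀ g·e^{tX}·e^{ε(Y+tZ)}`, the canonical involution `Θ`
(swap of the parameters `t` and `ε`) takes the form
`Θ(g,X,Y,Z) = (g, Y, X, Z + [X,Y])`.  In a matrix-group model (structure group inside
a complete normed algebra `A`, bracket the commutator `[X,Y] = XY − YX`), this says
the swapped family `(t,ε) ↦ g·e^{εX}·e^{t(Y+εZ)}` and the family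
`(t,ε) ↦ g·e^{tY}·e^{ε(X + t(Z+[X,Y]))} = Ψ⁻¹(g, Y, X, Z+[X,Y])` define the same
element of the second iterated (vertical) tangent bundle: their second-order jet
data — value, `∂_t`, `∂_ε` and `∂²_{tε}` at `(0,0)` — coincide. -/
theorem stmt_17 {A : Type*} [NormedRing A] [NormedAlgebra ℝ A] [CompleteSpace A]
    (g X Y Z : A) :
    letI γ₁ : ℝ → ℝ → A := fun t e => g * exp (e • X) * exp (t • Y + (t * e) • Z)
    letI γ₂ : ℝ → ℝ → A := fun t e =>
      g * exp (t • Y) * exp (e • X + (t * e) • (Z + (X * Y - Y * X)))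
    (γ₁ 0 0 = γ₂ 0 0) ∧
    (deriv (fun t => γ₁ t 0) 0 = deriv (fun t => γ₂ t 0) 0) ∧
    (deriv (fun e => γ₁ 0 e) 0 = deriv (fun e => γ₂ 0 e) 0) ∧
    (deriv (fun t => deriv (fun e => γ₁ t e) 0) 0
      = deriv (fun t => deriv (fun e => γ₂ t e) 0) 0) := by
  refine ⟨by simp, by simp, by simp, ?_⟩
  rw [deriv_deriv_mul_exp_smul_mul_exp_swap, deriv_deriv_mul_exp_smul_mul_exp]
  noncomm_ring
end
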